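/- Let k ≥ 1 and let D be a trivial equidistant binary code of length n with distance 2k and |D| ≥ 2; that is, any two distinct words of D are at Hamming distance exactly 2k, and in every coordinate at least |D| − 1 of the codewords take the same value. Then k · |D| ≤ n (i.e., |D| ≤ n/k). -/
import Mathlib


private lemma aux_le_one (a b d : ℕ) (h1 : a + b = d) (h2 : d - 1 ≤ a) : b ≤ 1 := by
  omega

/-- A trivial equidistant binary code of length `n` with distance `2k`
(any two distinct codewords are at distance exactly `2k`, and in every
coordinate all but at most one of the codewords take the same value)
with at least two codewords satisfies `k·|D| ≤ n`. -/
theorem trivial_equidistant_card_le (n k : ℕ) (hk : 1 ≤ k)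
    (D : Finset (Fin n → Fin 2)) (hD : 2 ≤ D.card)
    (hdist : ∀ x ∈ D, ∀ y ∈ D, x ≠ y → hammingDist x y = 2 * k)
    (htriv : ∀ i : Fin n, ∃ v : Fin 2,
      D.card - 1 ≤ (D.filter (fun c => c i = v)).card) :
    k * D.card ≤ n := by
  classical
  choose v hv using htriv
  set S : (Fin n → Fin 2) → Finset (Fin n) :=
    fun c => Finset.univ.filter (fun i => c i ≠ v i) with hS
  -- at most one deviator per coordinate
  have hone : ∀ i : Fin n, (D.filter (fun c => ¬ (c i = v i))).card ≤ 1 := by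
    intro i
    have hsplit : (D.filter (fun c => c i = v i)).card
        + (D.filter (fun c => ¬ (c i = v i))).card = D.card :=
      Finset.card_filter_add_card_filter_not (s := D) (fun c => c i = v i)
    exact aux_le_one _ _ _ hsplit (hv i)
  have huniq : ∀ x ∈ D, ∀ y ∈ D, x ≠ y → ∀ i : Fin n, x i ≠ v i → y i = v i := by
    intro x hx y hy hxy i hxi
    by_contra hyi
    have hsub : ({x, y} : Finset _) ⊆ D.filter (fun c => ¬ (c i = v i)) := by
      intro c hc
      simp only [Finset.mem_insert, Finset.mem_singleton] at hc
      rcases hc with rfl | rfl <;> simp [Finset.mem_filter, hx, hy, hxi, hyi]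
    have h2 : 2 ≤ (D.filter (fun c => ¬ (c i = v i))).card := by
      calc 2 = ({x, y} : Finset _).card := by
              rw [Finset.card_insert_of_notMem (by simp [hxy]), Finset.card_singleton]
        _ ≤ _ := Finset.card_le_card hsub
    exact absurd (h2.trans (hone i)) (by norm_num)
  have hdisj : ∀ x ∈ D, ∀ y ∈ D, x ≠ y → Disjoint (S x) (S y) := by
    intro x hx y hy hxy
    rw [Finset.disjoint_left]
    intro i hix hiy
    simp only [hS, Finset.mem_filter, Finset.mem_univ, true_and] at hix hiy
    exact hiy (huniq x hx y hy hxy i hix)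
  have hpair : ∀ x ∈ D, ∀ y ∈ D, x ≠ y → (S x).card + (S y).card = 2 * k := by
    intro x hx y hy hxy
    have hd := hdist x hx y hy hxy
    have hset : Finset.univ.filter (fun i => x i ≠ y i) = S x ∪ S y := by
      ext i
      simp only [Finset.mem_filter, Finset.mem_univ, true_and, Finset.mem_union, hS]
      constructor
      · intro h
        by_contra hcon
        push_neg at hcon
        exact h (hcon.1.trans hcon.2.symm)
      · rintro (h | h) hxyi
        · exact h (hxyi.trans (huniq x hx y hy hxy i h))
        · exact h (hxyi.symm.trans (huniq y hy x hx hxy.symm i h))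
    have hthis : hammingDist x y = (S x).card + (S y).card := by
      rw [hammingDist, hset, Finset.card_union_of_disjoint (hdisj x hx y hy hxy)]
    exact hthis.symm.trans hd
  set T : ℕ := ∑ x ∈ D, (S x).card with hT
  set m : ℕ := D.card with hm
  have hbig : ∀ x ∈ D, (∑ y ∈ D.erase x, ((S x).card + (S y).card))
      + ((S x).card + (S x).card) = m * (S x).card + T := by
    intro x hx
    have h1 : ((S x).card + (S x).card) + (∑ y ∈ D.erase x, ((S x).card + (S y).card))
        = ∑ y ∈ D, ((S x).card + (S y).card) :=
      Finset.add_sum_erase D (fun y => (S x).card + (S y).card) hx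
    have h2 : ∑ y ∈ D, ((S x).card + (S y).card) = m * (S x).card + T := by
      rw [Finset.sum_add_distrib, Finset.sum_const, smul_eq_mul, ← hT, ← hm]
    calc (∑ y ∈ D.erase x, ((S x).card + (S y).card)) + ((S x).card + (S x).card)
        = ((S x).card + (S x).card) + ∑ y ∈ D.erase x, ((S x).card + (S y).card) :=
          Nat.add_comm _ _
      _ = ∑ y ∈ D, ((S x).card + (S y).card) := h1
      _ = m * (S x).card + T := h2
  have hinner : ∀ x ∈ D, ∑ y ∈ D.erase x, ((S x).card + (S y).card) = (m - 1) * (2 * k) := by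
    intro x hx
    have : ∀ y ∈ D.erase x, (S x).card + (S y).card = 2 * k := by
      intro y hy
      have hmem := Finset.mem_erase.mp hy
      exact hpair x hx y hmem.2 hmem.1.symm
    rw [Finset.sum_congr rfl this, Finset.sum_const, smul_eq_mul,
      Finset.card_erase_of_mem hx, ← hm]
  have hsum1 : ∑ x ∈ D, ((∑ y ∈ D.erase x, ((S x).card + (S y).card))
      + ((S x).card + (S x).card)) = ∑ x ∈ D, (m * (S x).card + T) :=
    Finset.sum_congr rfl hbig
  have e1 : ∑ x ∈ D, ∑ y ∈ D.erase x, ((S x).card + (S y).card) = m * ((m - 1) * (2 * k)) := by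
    rw [Finset.sum_congr rfl hinner, Finset.sum_const, smul_eq_mul, ← hm]
  have e2 : ∑ x ∈ D, ((S x).card + (S x).card) = T + T := by
    rw [Finset.sum_add_distrib, ← hT]
  have e3 : ∑ x ∈ D, (m * (S x).card + T) = m * T + m * T := by
    rw [Finset.sum_add_distrib, ← Finset.mul_sum, ← hT, Finset.sum_const, smul_eq_mul, ← hm]
  have heq : m * ((m - 1) * (2 * k)) + (T + T) = m * T + m * T := by
    rw [← e1, ← e2, ← e3, ← Finset.sum_add_distrib]
    exact hsum1
  -- union bound
  have hle : T ≤ n := by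
    have hun : (D.biUnion S).card = T := by
      rw [Finset.card_biUnion hdisj, ← hT]
    calc T = (D.biUnion S).card := hun.symm
      _ ≤ (Finset.univ : Finset (Fin n)).card := Finset.card_le_card (Finset.subset_univ _)
      _ = n := by simp
  -- arithmetic: deduce T = k * m
  have hm1 : 1 ≤ m - 1 := Nat.le_pred_of_lt hD
  have hms : (m - 1) + 1 = m := Nat.succ_pred_eq_of_pos (Nat.lt_of_lt_of_le Nat.two_pos hD)
  set a := m - 1 with ha
  rw [← hms] at heq
  have h2 : a * ((a + 1) * (2 * k)) + 2 * T = a * (2 * T) + 2 * T := by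
    have l : a * ((a + 1) * (2 * k)) + 2 * T = (a + 1) * (a * (2 * k)) + (T + T) := by ring
    have r : (a + 1) * T + (a + 1) * T = a * (2 * T) + 2 * T := by ring
    rw [l, heq]
    exact r
  have h3 : a * ((a + 1) * (2 * k)) = a * (2 * T) := Nat.add_right_cancel h2
  have h4 : (a + 1) * (2 * k) = 2 * T := Nat.eq_of_mul_eq_mul_left hm1 h3
  have h5 : 2 * (k * (a + 1)) = 2 * T := by rw [← h4]; ring
  have h6 : k * (a + 1) = T := Nat.eq_of_mul_eq_mul_left (by norm_num) h5
  rw [← hms]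
  exact le_of_eq_of_le h6 hle
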